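/- Let F be a division ring, Λ = {α₁,…,αₙ} and Ω = {β₁,…,β_k} finite subsets of F with left and right minimal polynomials P_Λ (left) and P_Ω (right). A polynomial f ∈ F[z] satisfies f^ℓ(αᵢ)=0, f^r(βⱼ)=0, and (L_{αᵢ} f)^r(βⱼ)=0 for all i,j if and only if f ∈ P_Λ · F[z] · P_Ω, i.e., f = P_Λ · h · P_Ω for some h ∈ F[z]. -/

import Mathlib

open Polynomial

/-- Left evaluation of a polynomial `f = Σ zʲ fⱼ` at `a`: `f^ℓ(a) = Σ aʲ fⱼ`.
(Mathlib's `Polynomial.eval` is the right evaluation `Σ fⱼ aʲ`.) -/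
noncomputable def lEval {F : Type*} [DivisionRing F] (a : F) (f : F[X]) : F :=
  f.sum fun j c => a ^ j * c

/-- p is the left minimal polynomial of Δ: the monic generator of the right ideal
of polynomials left-vanishing on Δ. -/
def IsLeftMinPoly {F : Type*} [DivisionRing F] (Δ : Set F) (p : F[X]) : Prop :=
  p.Monic ∧ (∀ a ∈ Δ, lEval a p = 0) ∧
    ∀ f : F[X], (∀ a ∈ Δ, lEval a f = 0) → ∃ h : F[X], f = p * h

/-- p is the right minimal polynomial of Δ: the monic generator of the left ideal
of polynomials right-vanishing on Δ. -/
def IsRightMinPoly {F : Type*} [DivisionRing F] (Δ : Set F) (p : F[X]) : Prop :=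
  p.Monic ∧ (∀ a ∈ Δ, p.eval a = 0) ∧
    ∀ f : F[X], (∀ a ∈ Δ, f.eval a = 0) → ∃ h : F[X], f = h * p

/-!
Write `f = P_Λ g`. Since `L_α f = (L_α P_Λ) g`, the polynomials `x` with `(x g)^r` vanishing
on `Ω` form a left ideal containing `P_Λ` and every `L_α P_Λ`. Left ideals of `F[z]` are
principal, and minimality of `P_Λ` forces such an ideal to be all of `F[z]`; so `g^r` vanishes
on `Ω` and `g ∈ F[z] P_Ω`. The converse holds because left evaluation vanishes on left multiples
of a left-vanishing polynomial, and symmetrically on the right.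
-/

open MulOpposite

namespace Polynomial

section Semiring

variable {R : Type*} [Semiring R]

theorem eval_mul_eq_zero_of_eval_eq_zero (p : R[X]) {q : R[X]} {b : R} (h : q.eval b = 0) :
    (p * q).eval b = 0 := by
  induction p using Polynomial.induction_on' with
  | add u v hu hv => rw [add_mul, eval_add, hu, hv, add_zero]
  | monomial n c =>
    rw [← C_mul_X_pow_eq_monomial, mul_assoc, (commute_X_pow q n).eq, eval_C_mul,
      eval_mul_X_pow, h, zero_mul, mul_zero]

def rightVanishingIdeal (Ω : Set R) : Ideal R[X] where
  carrier := {f | ∀ b ∈ Ω, f.eval b = 0}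
  add_mem' hf hg b hb := by rw [eval_add, hf b hb, hg b hb, add_zero]
  zero_mem' b _ := eval_zero
  smul_mem' p _ hf b hb := eval_mul_eq_zero_of_eval_eq_zero p (hf b hb)

theorem mem_rightVanishingIdeal {Ω : Set R} {f : R[X]} :
    f ∈ rightVanishingIdeal Ω ↔ ∀ b ∈ Ω, f.eval b = 0 :=
  Iff.rfl

theorem degree_opRingEquiv (p : R[X]ᵐᵒᵖ) : (opRingEquiv R p).degree = (unop p).degree := by
  rw [degree, support_opRingEquiv, degree]

theorem Monic.opRingEquiv_op {p : R[X]} (hp : p.Monic) : (opRingEquiv R (op p)).Monic := by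
  rw [Monic, leadingCoeff_opRingEquiv, unop_op, hp.leadingCoeff, op_one]

end Semiring

theorem exists_eq_mul_add_of_monic {R : Type*} [Ring R] [Nontrivial R] (f : R[X]) {d : R[X]}
    (hd : d.Monic) : ∃ q r : R[X], f = q * d + r ∧ r.degree < d.degree := by
  -- `/ₘ` puts the quotient to the right of `d`; transport it through `R[X]ᵐᵒᵖ ≃ Rᵐᵒᵖ[X]`.
  let e := opRingEquiv R
  refine ⟨unop (e.symm (e (op f) /ₘ e (op d))), unop (e.symm (e (op f) %ₘ e (op d))),
    ?_, ?_⟩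
  · apply op_injective
    apply e.injective
    simp only [op_add, op_mul, op_unop, map_add, map_mul, RingEquiv.apply_symm_apply]
    rw [add_comm, modByMonic_add_div]
  · have := degree_modByMonic_lt (e (op f)) hd.opRingEquiv_op
    rwa [← e.apply_symm_apply (e (op f) %ₘ e (op d)), degree_opRingEquiv,
      degree_opRingEquiv, unop_op] at this

end Polynomial

section DivisionRing

variable {F : Type*} [DivisionRing F]

theorem lEval_add (a : F) (p q : F[X]) : lEval a (p + q) = lEval a p + lEval a q :=
  sum_add_index _ _ _ (fun _ => mul_zero _) fun _ _ _ => mul_add _ _ _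

theorem lEval_monomial (a : F) (n : ℕ) (c : F) : lEval a (monomial n c) = a ^ n * c :=
  sum_monomial_index _ _ (mul_zero _)

theorem lEval_C (a c : F) : lEval a (C c) = c := by
  rw [← monomial_zero_left, lEval_monomial, pow_zero, one_mul]

theorem eval_opRingEquiv_op (a : F) (f : F[X]) :
    (opRingEquiv F (op f)).eval (op a) = op (lEval a f) := by
  induction f using Polynomial.induction_on' with
  | add p q hp hq => rw [op_add, map_add, eval_add, hp, hq, lEval_add, op_add]
  | monomial n c => rw [opRingEquiv_op_monomial, eval_monomial, lEval_monomial, op_mul, op_pow]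

theorem lEval_eq_zero_iff (a : F) (f : F[X]) :
    lEval a f = 0 ↔ (opRingEquiv F (op f)).eval (op a) = 0 := by
  rw [eval_opRingEquiv_op, op_eq_zero_iff]

theorem lEval_mul_eq_zero_of_lEval_eq_zero {a : F} {p : F[X]} (h : lEval a p = 0) (q : F[X]) :
    lEval a (p * q) = 0 := by
  rw [lEval_eq_zero_iff] at h ⊢
  rw [op_mul, map_mul]
  exact eval_mul_eq_zero_of_eval_eq_zero _ h

theorem lEval_X_sub_C_mul_self (a : F) (q : F[X]) : lEval a ((X - C a) * q) = 0 := by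
  refine lEval_mul_eq_zero_of_lEval_eq_zero ?_ q
  rw [lEval_eq_zero_iff, op_sub, map_sub, opRingEquiv_op_X, opRingEquiv_op_C,
    ← one_mul (X - _), eval_mul_X_sub_C]

theorem exists_eq_X_sub_C_mul_of_lEval_eq_zero {a : F} {f : F[X]} (h : lEval a f = 0) :
    ∃ q, f = (X - C a) * q := by
  obtain ⟨c, hc⟩ : ∃ c, f %ₘ (X - C a) = C c := by
    refine ⟨_, eq_C_of_degree_le_zero (Nat.WithBot.lt_one_iff_le_zero.mp ?_)⟩
    simpa using degree_modByMonic_lt f (monic_X_sub_C a)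
  have hf := modByMonic_add_div f (X - C a)
  refine ⟨f /ₘ (X - C a), ?_⟩
  rw [← hf, lEval_add, lEval_X_sub_C_mul_self, hc, lEval_C, add_zero] at h
  nth_rw 1 [← hf, hc, h, map_zero, zero_add]

theorem exists_monic_mem_of_ne_zero {I : Ideal F[X]} {p : F[X]} (hpI : p ∈ I) (hp : p ≠ 0) :
    ∃ d ∈ I, d.Monic ∧ d.natDegree = p.natDegree := by
  have hc : p.leadingCoeff ≠ 0 := leadingCoeff_ne_zero.mpr hp
  exact ⟨C p.leadingCoeff⁻¹ * p, I.smul_mem _ hpI,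
    monic_C_mul_of_mul_leadingCoeff_eq_one (inv_mul_cancel₀ hc),
    natDegree_C_mul (inv_ne_zero hc)⟩

/-- `Ideal F[X]` consists of left ideals; a monic element of least degree generates one,
by right division with remainder. -/
instance : IsPrincipalIdealRing F[X] where
  principal I := by
    classical
    by_cases hI : I = ⊥
    · exact hI ▸ bot_isPrincipal
    obtain ⟨p, hpI, hp⟩ := Submodule.exists_mem_ne_zero_of_ne_bot hI
    have hex : ∃ m, ∃ d ∈ I, d.Monic ∧ d.natDegree = m :=
      ⟨_, exists_monic_mem_of_ne_zero hpI hp⟩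
    obtain ⟨d, hdI, hd, hdeg⟩ := Nat.find_spec hex
    refine ⟨d, le_antisymm (fun f hf => ?_) (Ideal.span_singleton_le_iff_mem I |>.mpr hdI)⟩
    obtain ⟨q, r, rfl, hr⟩ := exists_eq_mul_add_of_monic f hd
    have hrI : r ∈ I := by simpa using I.sub_mem hf (I.smul_mem q hdI)
    obtain rfl : r = 0 := by
      by_contra hr0
      obtain ⟨r', hr'I, hr', hr'deg⟩ := exists_monic_mem_of_ne_zero hrI hr0
      have := Nat.find_min' hex ⟨r', hr'I, hr', rfl⟩
      have := natDegree_lt_natDegree hr0 hr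
      omega
    exact Submodule.mem_span_singleton.mpr ⟨q, (add_zero _).symm⟩

/-- If `I = F[X] d`, the cofactor of `P` over `d` left-vanishes on `Δ`, hence is a right multiple
of `P`, which makes `d` a unit. -/
theorem IsLeftMinPoly.one_mem {Δ : Set F} {P : F[X]} (hP : IsLeftMinPoly Δ P)
    {I : Ideal F[X]} (hPI : P ∈ I) (hquot : ∀ a ∈ Δ, ∀ p, P = (X - C a) * p → p ∈ I) :
    (1 : F[X]) ∈ I := by
  obtain ⟨hPm, hPΔ, hPmin⟩ := hP
  obtain ⟨d, rfl⟩ := IsPrincipalIdealRing.principal I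
  obtain ⟨e, hPe⟩ := Ideal.mem_span_singleton'.mp hPI
  have hd : d ≠ 0 := by
    rintro rfl
    exact hPm.ne_zero (by simpa using hPe.symm)
  have he : ∀ a ∈ Δ, lEval a e = 0 := by
    intro a ha
    obtain ⟨p, hp⟩ := exists_eq_X_sub_C_mul_of_lEval_eq_zero (hPΔ a ha)
    obtain ⟨s, rfl⟩ := Ideal.mem_span_singleton'.mp (hquot a ha p hp)
    obtain rfl : e = (X - C a) * s := mul_right_cancel₀ hd (by rw [hPe, hp, mul_assoc])
    exact lEval_X_sub_C_mul_self a s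
  obtain ⟨h, rfl⟩ := hPmin e he
  refine Ideal.mem_span_singleton'.mpr ⟨h, mul_left_cancel₀ hPm.ne_zero ?_⟩
  rw [← mul_assoc, hPe, mul_one]

end DivisionRing

theorem stmt11_general {F : Type*} [DivisionRing F] (n k : ℕ)
    (α : Fin n → F) (β : Fin k → F)
    (P Q : F[X]) (hP : IsLeftMinPoly (Set.range α) P)
    (hQ : IsRightMinPoly (Set.range β) Q) (f : F[X]) :
    ((∀ i, lEval (α i) f = 0) ∧ (∀ j, f.eval (β j) = 0) ∧
      (∀ i j, ∀ q : F[X],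
        f = C (lEval (α i) f) + (X - C (α i)) * q → q.eval (β j) = 0)) ↔
    (∃ h : F[X], f = P * h * Q) := by
  constructor
  · rintro ⟨hfα, hfβ, hquot⟩
    obtain ⟨g, rfl⟩ := hP.2.2 f (Set.forall_mem_range.mpr hfα)
    let I : Ideal F[X] :=
      Submodule.comap (LinearMap.toSpanSingleton F[X] F[X] g) (rightVanishingIdeal (Set.range β))
    have mem_I (x : F[X]) : x ∈ I ↔ ∀ j, (x * g).eval (β j) = 0 := by
      simp [I, mem_rightVanishingIdeal]
    have one_mem_I : (1 : F[X]) ∈ I := by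
      refine hP.one_mem ((mem_I P).mpr hfβ) ?_
      rintro _ ⟨i, rfl⟩ p hp
      refine (mem_I p).mpr fun j => hquot i j _ ?_
      rw [hfα i, map_zero, zero_add, hp, mul_assoc]
    obtain ⟨h, rfl⟩ := hQ.2.2 g (by simpa [mem_I] using one_mem_I)
    exact ⟨h, by rw [mul_assoc]⟩
  · rintro ⟨h, rfl⟩
    have hfα (i : Fin n) : lEval (α i) (P * h * Q) = 0 := by
      rw [mul_assoc]
      exact lEval_mul_eq_zero_of_lEval_eq_zero (hP.2.1 _ ⟨i, rfl⟩) _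
    refine ⟨hfα, fun j => eval_mul_eq_zero_of_eval_eq_zero _ (hQ.2.1 _ ⟨j, rfl⟩), ?_⟩
    intro i j q hq
    obtain ⟨p, hp⟩ := exists_eq_X_sub_C_mul_of_lEval_eq_zero (hP.2.1 _ ⟨i, rfl⟩)
    rw [hfα i, map_zero, zero_add] at hq
    obtain rfl : q = p * h * Q := by
      refine mul_left_cancel₀ (X_sub_C_ne_zero (α i)) ?_
      rw [← hq, hp]
      simp only [mul_assoc]
    exact eval_mul_eq_zero_of_eval_eq_zero _ (hQ.2.1 _ ⟨j, rfl⟩)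

/-- f satisfies f^ℓ(αᵢ)=0, f^r(βⱼ)=0, (L_{αᵢ}f)^r(βⱼ)=0 for all i,j
iff f ∈ P_Λ·F[z]·P_Ω. -/
theorem stmt11 {F : Type*} [DivisionRing F] (n k : ℕ)
    (α : Fin n → F) (β : Fin k → F)
    (hα : Function.Injective α) (hβ : Function.Injective β)
    (P Q : F[X]) (hP : IsLeftMinPoly (Set.range α) P)
    (hQ : IsRightMinPoly (Set.range β) Q) (f : F[X]) :
    ((∀ i, lEval (α i) f = 0) ∧ (∀ j, f.eval (β j) = 0) ∧
      (∀ i j, ∀ q : F[X],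
        f = C (lEval (α i) f) + (X - C (α i)) * q → q.eval (β j) = 0)) ↔
    (∃ h : F[X], f = P * h * Q) :=
  stmt11_general n k α β P Q hP hQ f
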